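/- arXiv:0909.4547 — 2 statements merged into one kernel-verified Lean document; each statement's English description precedes it below -/
import Mathlib

section
/- For any matroid M with a fixed linear order on its ground set, the number of bases of M containing no broken circuit equals (−1)^{r(M)} χ_M(0), where χ_M is the characteristic polynomial of M. -/
/-!
At `t = 0` only the spanning sets `S` contribute to `χ_M`, so
`(−1)^{r(M)} χ_M(0) = (−1)^{r(M)} ∑_{S spanning} (−1)^{|S|}`.
Call `e` active for `S` if `e` lies in the closure of the elements of `S` below `e`. Since the
largest element of a circuit is spanned by the others, `S` contains no broken circuit exactly when
it has no active element. Toggling the least active element does not change which elements below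
it are active, so it is a sign-reversing involution on the spanning sets containing a broken
circuit. The remaining spanning sets contain no circuit either, so they are the nbc bases, each
contributing `(−1)^{r(M)}`.
-/

open scoped Classical
open Polynomial Finset

variable {α : Type*}

/-- A circuit of a matroid: a minimal dependent (finite) set. -/
def IsCircuit (M : Matroid α) (C : Finset α) : Prop :=
  M.Dep (C : Set α) ∧ ∀ D : Finset α, D ⊂ C → M.Indep (D : Set α)

/-- A broken circuit with respect to a linear order: a circuit with its largest
element removed. -/
def IsBrokenCircuit [LinearOrder α] (M : Matroid α) (B : Finset α) : Prop :=
  ∃ C : Finset α, IsCircuit M C ∧ ∃ u ∈ C, (∀ v ∈ C, v ≤ u) ∧ B = C.erase u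

/-- `S` contains no broken circuit. -/
def NoBrokenCircuit [LinearOrder α] (M : Matroid α) (S : Finset α) : Prop :=
  ∀ B : Finset α, IsBrokenCircuit M B → ¬ B ⊆ S

/-- The rank of a finite set in a matroid: the maximal size of an independent subset. -/
noncomputable def mrank (M : Matroid α) (S : Finset α) : ℕ :=
  (S.powerset.filter fun T : Finset α => M.Indep (T : Set α)).sup Finset.card

/-- The characteristic polynomial of a (finite) matroid:
`χ_M(t) = Σ_{S ⊆ E} (−1)^{|S|} t^{r(M) − r(S)}`. -/
noncomputable def matCharPoly [Fintype α] (M : Matroid α) : Polynomial ℤ :=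
  ∑ S : Finset α, (-1 : ℤ[X]) ^ S.card * X ^ (mrank M univ - mrank M S)

open scoped symmDiff

lemma Finset.symmDiff_singleton_of_mem [DecidableEq α] {s : Finset α} {a : α} (h : a ∈ s) :
    s ∆ {a} = s.erase a := by
  ext x; by_cases hx : x = a <;> simp [mem_symmDiff, hx, h]

lemma Finset.symmDiff_singleton_of_notMem [DecidableEq α] {s : Finset α} {a : α} (h : a ∉ s) :
    s ∆ {a} = insert a s := by
  ext x; by_cases hx : x = a <;> simp [mem_symmDiff, hx, h]

lemma Finset.neg_one_pow_card_symmDiff_singleton {R : Type*} [Monoid R] [HasDistribNeg R]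
    [DecidableEq α] (s : Finset α) (a : α) : (-1 : R) ^ #(s ∆ {a}) = -(-1) ^ #s := by
  by_cases h : a ∈ s
  · rw [symmDiff_singleton_of_mem h, ← card_erase_add_one h, pow_succ, mul_neg_one, neg_neg]
  · rw [symmDiff_singleton_of_notMem h, card_insert_of_notMem h, pow_succ, mul_neg_one]

lemma mrank_eq_eRk (M : Matroid α) (S : Finset α) : (mrank M S : ℕ∞) = M.eRk S := by
  refine le_antisymm ?_ (Matroid.eRk_le_iff.2 fun I hIS hI ↦ ?_)
  · have hne : (S.powerset.filter fun T : Finset α ↦ M.Indep T).Nonempty :=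
      ⟨∅, mem_filter.2 ⟨empty_mem_powerset S, by simp⟩⟩
    obtain ⟨T, hT, hTcard⟩ := exists_mem_eq_sup _ hne Finset.card
    rw [mem_filter, mem_powerset] at hT
    rw [mrank, hTcard, ← Set.encard_coe_eq_coe_finsetCard]
    exact hT.2.encard_le_eRk_of_subset (coe_subset.2 hT.1)
  · lift I to Finset α using S.finite_toSet.subset hIS
    rw [Set.encard_coe_eq_coe_finsetCard, Nat.cast_le]
    exact le_sup (f := Finset.card) (mem_filter.2 ⟨mem_powerset.2 (coe_subset.1 hIS), hI⟩)

namespace Matroid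

variable {M : Matroid α}

lemma IsBase.card_eq_mrank_univ [Fintype α] {B : Finset α} (hB : M.IsBase B) :
    #B = mrank M univ := by
  have h := mrank_eq_eRk M univ
  rw [coe_univ, eRk_univ_eq, ← hB.encard_eq_eRank, Set.encard_coe_eq_coe_finsetCard] at h
  exact_mod_cast h.symm

lemma spanning_iff_mrank_univ_le [Fintype α] {S : Finset α} (hS : (S : Set α) ⊆ M.E) :
    M.Spanning S ↔ mrank M univ ≤ mrank M S := by
  rw [spanning_iff_eRk_le hS, ← eRk_univ_eq, ← coe_univ, ← mrank_eq_eRk, ← mrank_eq_eRk,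
    Nat.cast_le]

end Matroid

lemma matCharPoly_eval_zero [Fintype α] {M : Matroid α} (hE : M.E = Set.univ) :
    (matCharPoly M).eval 0 = ∑ S ∈ univ.filter (fun S : Finset α ↦ M.Spanning S), (-1) ^ #S := by
  rw [matCharPoly, eval_finsetSum, sum_filter]
  refine sum_congr rfl fun S _ ↦ ?_
  simp only [eval_mul, eval_pow, eval_neg, eval_one, eval_X, zero_pow_eq, Nat.sub_eq_zero_iff_le,
    ← M.spanning_iff_mrank_univ_le (hE ▸ Set.subset_univ _)]
  split_ifs <;> simp

lemma isCircuit_iff_isCircuit_coe {M : Matroid α} {C : Finset α} :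
    IsCircuit M C ↔ M.IsCircuit C := by
  rw [Matroid.isCircuit_iff_forall_ssubset, IsCircuit]
  refine and_congr_right fun _ ↦ ⟨fun h I hIC ↦ ?_, fun h D hDC ↦ h (coe_ssubset.2 hDC)⟩
  lift I to Finset α using C.finite_toSet.subset hIC.subset
  exact h I (coe_ssubset.1 hIC)

section BrokenCircuits

variable [LinearOrder α] {M : Matroid α} {S : Finset α}

lemma noBrokenCircuit_iff : NoBrokenCircuit M S ↔
    ∀ C : Finset α, M.IsCircuit C → ∀ u ∈ C, (∀ v ∈ C, v ≤ u) → ¬ C.erase u ⊆ S := by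
  simp only [NoBrokenCircuit, IsBrokenCircuit, isCircuit_iff_isCircuit_coe]
  grind

lemma NoBrokenCircuit.indep (h : NoBrokenCircuit M S) (hS : (S : Set α) ⊆ M.E) :
    M.Indep S := by
  by_contra hdep
  obtain ⟨C, hCS, hC⟩ := ((M.not_indep_iff hS).1 hdep).exists_isCircuit_subset
  lift C to Finset α using S.finite_toSet.subset hCS
  have hne : C.Nonempty := coe_nonempty.1 hC.nonempty
  exact noBrokenCircuit_iff.1 h C hC _ (C.max'_mem hne) (C.le_max' · ·)
    ((erase_subset _ _).trans (coe_subset.1 hCS))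

lemma spanning_and_noBrokenCircuit_iff :
    M.Spanning S ∧ NoBrokenCircuit M S ↔ M.IsBase S ∧ NoBrokenCircuit M S :=
  ⟨fun ⟨hsp, h⟩ ↦ ⟨hsp.isBase_of_indep (h.indep hsp.subset_ground), h⟩,
    fun ⟨hB, h⟩ ↦ ⟨hB.spanning, h⟩⟩

variable [Fintype α]

noncomputable def activeSet (M : Matroid α) (S : Finset α) : Finset α :=
  univ.filter fun e ↦ e ∈ M.closure ↑(S.filter (· < e))

lemma mem_activeSet {e : α} : e ∈ activeSet M S ↔ e ∈ M.closure ↑(S.filter (· < e)) := by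
  simp [activeSet]

lemma noBrokenCircuit_iff_activeSet_eq_empty : NoBrokenCircuit M S ↔ activeSet M S = ∅ := by
  refine ⟨fun h ↦ eq_empty_iff_forall_notMem.2 fun e he ↦ ?_, fun h ↦ ?_⟩
  · obtain ⟨C, hCsub, hC, heC⟩ :=
      M.exists_isCircuit_of_mem_closure (mem_activeSet.1 he) (by simp)
    lift C to Finset α using ((S.filter (· < e)).finite_toSet.insert e).subset hCsub
    have hlt : ∀ v ∈ C, v ≠ e → v ∈ S ∧ v < e := fun v hv hve ↦ by
      simpa [hve] using hCsub hv
    refine noBrokenCircuit_iff.1 h C hC e heC (fun v hv ↦ ?_) (fun v hv ↦ ?_)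
    · obtain rfl | hve := eq_or_ne v e
      exacts [le_rfl, (hlt v hv hve).2.le]
    · exact (hlt v (mem_of_mem_erase hv) (ne_of_mem_erase hv)).1
  · refine noBrokenCircuit_iff.2 fun C hC u hu hmax hsub ↦ notMem_empty u (h ▸ ?_)
    refine mem_activeSet.2 (M.closure_subset_closure ?_ (hC.mem_closure_sdiff_singleton_of_mem hu))
    intro v ⟨hvC, hvu⟩
    have hvu : v ≠ u := hvu
    simpa using ⟨hsub (mem_erase.2 ⟨hvu, hvC⟩), (hmax v hvC).lt_of_ne hvu⟩

end BrokenCircuits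

section Toggle

variable [LinearOrder α] [Fintype α] {M : Matroid α} {S : Finset α} {e : α}

lemma mem_activeSet_symmDiff_singleton_iff {c : α} (hce : c ≤ e) :
    c ∈ activeSet M (S ∆ {e}) ↔ c ∈ activeSet M S := by
  have hfilter : (S ∆ {e}).filter (· < c) = S.filter (· < c) := by
    ext x
    have hxe : x < c → x ≠ e := fun hxc ↦ (hxc.trans_le hce).ne
    simp only [mem_filter, mem_symmDiff, mem_singleton]
    tauto
  rw [mem_activeSet, mem_activeSet, hfilter]

lemma IsLeast.activeSet_symmDiff_singleton (he : IsLeast ↑(activeSet M S) e) :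
    IsLeast ↑(activeSet M (S ∆ {e})) e := by
  refine ⟨(mem_activeSet_symmDiff_singleton_iff le_rfl).2 he.1, fun f hf ↦ ?_⟩
  by_contra! hfe
  exact not_lt.2 (he.2 ((mem_activeSet_symmDiff_singleton_iff hfe.le).1 hf)) hfe

lemma Matroid.Spanning.symmDiff_singleton_of_mem_activeSet (hS : M.Spanning S)
    (he : e ∈ activeSet M S) : M.Spanning ↑(S ∆ {e}) := by
  have heE : e ∈ M.E := M.closure_subset_ground _ (mem_activeSet.1 he)
  by_cases heS : e ∈ S
  · have hcl : e ∈ M.closure (↑S \ {e}) := M.closure_subset_closure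
      (fun x hx ↦ by simpa using And.intro (mem_filter.1 hx).1 (mem_filter.1 hx).2.ne)
      (mem_activeSet.1 he)
    rw [symmDiff_singleton_of_mem heS, coe_erase, spanning_iff_closure_eq,
      closure_sdiff_singleton_eq_closure hcl, hS.closure_eq]
  · rw [symmDiff_singleton_of_notMem heS, coe_insert]
    exact hS.superset (Set.subset_insert _ _) (Set.insert_subset heE hS.subset_ground)

noncomputable def toggleMinActive (M : Matroid α) (S : Finset α) : Finset α :=
  if h : (activeSet M S).Nonempty then S ∆ {(activeSet M S).min' h} else S

lemma toggleMinActive_of_nonempty (h : (activeSet M S).Nonempty) :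
    toggleMinActive M S = S ∆ {(activeSet M S).min' h} :=
  dif_pos h

lemma toggleMinActive_toggleMinActive (h : (activeSet M S).Nonempty) :
    toggleMinActive M (toggleMinActive M S) = S := by
  have hl := (isLeast_min' _ h).activeSet_symmDiff_singleton
  have h' : (activeSet M (S ∆ {(activeSet M S).min' h})).Nonempty := ⟨_, hl.1⟩
  rw [toggleMinActive_of_nonempty h, toggleMinActive_of_nonempty h',
    (isLeast_min' _ h').unique hl, symmDiff_symmDiff_cancel_right]

lemma sum_neg_one_pow_card_spanning_not_noBrokenCircuit :
    ∑ S ∈ univ.filter (fun S : Finset α ↦ M.Spanning S ∧ ¬ NoBrokenCircuit M S), (-1 : ℤ) ^ #S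
      = 0 := by
  have hne : ∀ S ∈ univ.filter (fun S : Finset α ↦ M.Spanning S ∧ ¬ NoBrokenCircuit M S),
      (activeSet M S).Nonempty := fun S hS ↦ by
    rw [nonempty_iff_ne_empty, Ne, ← noBrokenCircuit_iff_activeSet_eq_empty]
    exact (mem_filter.1 hS).2.2
  refine sum_involution (fun S _ ↦ toggleMinActive M S) (fun S hS ↦ ?_) (fun S hS _ ↦ ?_)
    (fun S hS ↦ ?_) (fun S hS ↦ toggleMinActive_toggleMinActive (hne S hS))
  · rw [toggleMinActive_of_nonempty (hne S hS), neg_one_pow_card_symmDiff_singleton,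
      add_neg_cancel]
  · rw [toggleMinActive_of_nonempty (hne S hS), Ne, symmDiff_eq_left]
    exact singleton_ne_empty _
  · have hl := (isLeast_min' _ (hne S hS)).activeSet_symmDiff_singleton
    rw [toggleMinActive_of_nonempty (hne S hS), mem_filter, noBrokenCircuit_iff_activeSet_eq_empty]
    exact ⟨mem_univ _, ((mem_filter.1 hS).2.1.symmDiff_singleton_of_mem_activeSet
      (min'_mem _ _)), ne_empty_of_mem (mem_coe.1 hl.1)⟩

end Toggle

/-- For a matroid `M` with a linearly ordered ground set, the number of bases
containing no broken circuit equals `(−1)^{r(M)} χ_M(0)`. -/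
theorem nbc_bases_eq_charPoly_at_zero [Fintype α] [LinearOrder α]
    (M : Matroid α) (hE : M.E = Set.univ) :
    ((univ.filter fun S : Finset α =>
        M.IsBase (S : Set α) ∧ NoBrokenCircuit M S).card : ℤ) =
      (-1 : ℤ) ^ (mrank M univ) * (matCharPoly M).eval 0 := by
  set nbcBases := univ.filter fun S : Finset α => M.IsBase (S : Set α) ∧ NoBrokenCircuit M S
  have hsum : ∑ S ∈ nbcBases, (-1 : ℤ) ^ #S = #nbcBases * (-1) ^ mrank M univ := by
    rw [sum_congr rfl fun S hS ↦ by rw [(mem_filter.1 hS).2.1.card_eq_mrank_univ], sum_const,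
      nsmul_eq_mul]
  have hχ : (matCharPoly M).eval 0 = #nbcBases * (-1) ^ mrank M univ := by
    rw [matCharPoly_eval_zero hE, ← sum_filter_add_sum_filter_not _ (NoBrokenCircuit M),
      filter_filter, filter_filter, sum_neg_one_pow_card_spanning_not_noBrokenCircuit, add_zero,
      ← hsum]
    simp_rw [spanning_and_noBrokenCircuit_iff, nbcBases]
  rw [hχ, mul_left_comm, ← pow_add, Even.neg_one_pow ⟨_, rfl⟩, mul_one]
end

section
/- Let h₁,...,h_N be nonzero linear forms on C^r with the dependence property that whenever h_i = Σ_j c_j h_{i_j} with i_1 < ... < i_k < i, then (Σ_j |c_j|)·R_{i_k} < R_i for positive reals R₁ ≪ ... ≪ R_N. If S = {H_{j_1},...,H_{j_r}} is a basis of the arrangement containing no broken circuit, and x ∈ C^r satisfies |h_{j_l}(x)| = R_{j_l} for all l, then |h_i(x)| > R_i for every hyperplane H_i ∉ S. -/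
open Finset

/-- Independence in the linear matroid of the forms `h`. -/
def LinIndep {N : ℕ} {V : Type*} [AddCommGroup V] [Module ℂ V]
    (h : Fin N → V) (S : Finset (Fin N)) : Prop :=
  LinearIndependent ℂ (fun x : S => h x)

/-- A circuit of the linear matroid of `h`: a minimal dependent set. -/
def LinCircuit {N : ℕ} {V : Type*} [AddCommGroup V] [Module ℂ V]
    (h : Fin N → V) (C : Finset (Fin N)) : Prop :=
  ¬ LinIndep h C ∧ ∀ D : Finset (Fin N), D ⊂ C → LinIndep h D

/-- A base of the linear matroid of `h`: a maximal independent set. -/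
def LinBase {N : ℕ} {V : Type*} [AddCommGroup V] [Module ℂ V]
    (h : Fin N → V) (S : Finset (Fin N)) : Prop :=
  LinIndep h S ∧ ∀ T : Finset (Fin N), S ⊆ T → LinIndep h T → T = S

/-- `S` contains no broken circuit (with respect to the index order). -/
def LinNoBrokenCircuit {N : ℕ} {V : Type*} [AddCommGroup V] [Module ℂ V]
    (h : Fin N → V) (S : Finset (Fin N)) : Prop :=
  ∀ C : Finset (Fin N), LinCircuit h C → ∀ hC : C.Nonempty, ¬ C.erase (C.max' hC) ⊆ S


/-! The fundamental circuit `C ⊆ S ∪ {i}` of `i` yields a relation `h_m = ∑ d_j h_j` over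
`C \ {m}`, where `m = max C`. Since `S` contains no broken circuit, `m ≠ i`, so `m ∈ S`.
Evaluating at `x` and comparing with the growth condition,
`∑ |d_j| R_j ≤ (∑ |d_j|) R_{max} < R_m = |h_m(x)| ≤ ∑ |d_j| |h_j(x)|`, and all terms with
`j ≠ i` agree on both sides because `j ∈ S`; hence `R_i < |h_i(x)|`. -/

section Matroid

variable {N : ℕ} {V : Type*} [AddCommGroup V] [Module ℂ V] {h : Fin N → V}

theorem linIndep_iff {S : Finset (Fin N)} :
    LinIndep h S ↔ ∀ f : Fin N → ℂ, ∑ i ∈ S, f i • h i = 0 → ∀ i ∈ S, f i = 0 :=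
  linearIndepOn_finset_iff

theorem LinIndep.mono {D S : Finset (Fin N)} (hS : LinIndep h S) (hDS : D ⊆ S) :
    LinIndep h D :=
  LinearIndepOn.mono hS (coe_subset.mpr hDS)

theorem exists_linCircuit_subset {D : Finset (Fin N)} (hD : ¬ LinIndep h D) :
    ∃ C ⊆ D, LinCircuit h C := by
  obtain ⟨C, ⟨hCD, hC⟩, hmin⟩ :=
    exists_minimal_of_wellFoundedLT (fun C => C ⊆ D ∧ ¬ LinIndep h C) ⟨D, subset_rfl, hD⟩
  refine ⟨C, hCD, hC, fun E hEC => ?_⟩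
  by_contra hE
  exact hEC.not_ge (hmin ⟨hEC.subset.trans hCD, hE⟩ hEC.le)

theorem LinBase.exists_linCircuit_subset_insert {S : Finset (Fin N)} (hS : LinBase h S)
    {i : Fin N} (hi : i ∉ S) : ∃ C ⊆ insert i S, i ∈ C ∧ LinCircuit h C := by
  have hdep : ¬ LinIndep h (insert i S) := fun hind =>
    hi (hS.2 _ (subset_insert i S) hind ▸ mem_insert_self i S)
  obtain ⟨C, hCsub, hC⟩ := exists_linCircuit_subset hdep
  refine ⟨C, hCsub, ?_, hC⟩
  by_contra hiC
  exact hC.1 <| hS.1.mono fun j hj =>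
    mem_of_mem_insert_of_ne (hCsub hj) (ne_of_mem_of_not_mem hj hiC)

-- A vanishing coefficient would leave a relation on the independent set `C \ {j}`.
theorem LinCircuit.exists_sum_smul_eq_zero {C : Finset (Fin N)} (hC : LinCircuit h C) :
    ∃ c : Fin N → ℂ, (∀ j ∈ C, c j ≠ 0) ∧ ∑ j ∈ C, c j • h j = 0 := by
  obtain ⟨c, hsum, j₀, hj₀C, hj₀⟩ :
      ∃ c : Fin N → ℂ, ∑ j ∈ C, c j • h j = 0 ∧ ∃ j ∈ C, c j ≠ 0 := by
    simpa [linIndep_iff] using hC.1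
  refine ⟨c, fun j hjC hj => hj₀ ?_, hsum⟩
  have hj₀j : j₀ ≠ j := fun e => hj₀ (e ▸ hj)
  refine linIndep_iff.mp (hC.2 _ (erase_ssubset hjC)) c ?_ j₀ (mem_erase.mpr ⟨hj₀j, hj₀C⟩)
  rwa [sum_erase _ (by rw [hj, zero_smul])]

theorem LinCircuit.exists_eq_sum_erase {C : Finset (Fin N)} (hC : LinCircuit h C)
    {m : Fin N} (hm : m ∈ C) :
    ∃ d : Fin N → ℂ, (∀ j ∈ C.erase m, d j ≠ 0) ∧ h m = ∑ j ∈ C.erase m, d j • h j := by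
  obtain ⟨c, hc, hsum⟩ := hC.exists_sum_smul_eq_zero
  refine ⟨fun j => -(c m)⁻¹ * c j, fun j hj =>
    mul_ne_zero (neg_ne_zero.mpr (inv_ne_zero (hc m hm))) (hc j (mem_of_mem_erase hj)), ?_⟩
  rw [← add_sum_erase _ _ hm] at hsum
  calc h m = (c m)⁻¹ • (c m • h m) := by rw [smul_smul, inv_mul_cancel₀ (hc m hm), one_smul]
    _ = _ := by
      rw [eq_neg_of_add_eq_zero_left hsum, smul_neg, smul_sum, ← sum_neg_distrib]
      exact sum_congr rfl fun j _ => by rw [smul_smul, ← neg_smul, ← neg_mul]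

theorem LinNoBrokenCircuit.max'_mem {S C : Finset (Fin N)} (hS : LinNoBrokenCircuit h S)
    (hC : LinCircuit h C) {i : Fin N} (hCS : C ⊆ insert i S) (hne : C.Nonempty) :
    C.max' hne ∈ S := by
  have hmi : C.max' hne ≠ i := by
    rintro hmi
    refine hS C hC hne fun j hj => ?_
    rw [hmi, mem_erase] at hj
    exact mem_of_mem_insert_of_ne (hCS hj.2) hj.1
  exact mem_of_mem_insert_of_ne (hCS (C.max'_mem hne)) hmi

end Matroid

theorem norm_apply_le_sum_of_eq_sum {ι 𝕜 E : Type*} [NormedField 𝕜] [AddCommGroup E]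
    [Module 𝕜 E] {f : E →ₗ[𝕜] 𝕜} {g : ι → E →ₗ[𝕜] 𝕜} {T : Finset ι} {d : ι → 𝕜}
    (hf : f = ∑ j ∈ T, d j • g j) (x : E) : ‖f x‖ ≤ ∑ j ∈ T, ‖d j‖ * ‖g j x‖ := by
  rw [hf, LinearMap.sum_apply]
  refine (norm_sum_le _ _).trans_eq (sum_congr rfl fun j _ => ?_)
  rw [LinearMap.smul_apply, smul_eq_mul, norm_mul]

theorem lt_of_sum_mul_lt_sum_mul_of_eqOn_erase {ι : Type*} [DecidableEq ι] {T : Finset ι}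
    {i : ι} (hi : i ∈ T) {a R u : ι → ℝ} (ha : 0 < a i) (heq : ∀ j ∈ T.erase i, u j = R j)
    (hlt : ∑ j ∈ T, a j * R j < ∑ j ∈ T, a j * u j) : R i < u i := by
  have herase : ∑ j ∈ T.erase i, a j * u j = ∑ j ∈ T.erase i, a j * R j :=
    sum_congr rfl fun j hj => by rw [heq j hj]
  rw [← add_sum_erase _ _ hi, ← add_sum_erase _ _ hi, herase] at hlt
  exact lt_of_mul_lt_mul_left (lt_of_add_lt_add_right hlt) ha.le

theorem nbc_base_stratum_strict_general (N r : ℕ)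
    (h : Fin N → ((Fin r → ℂ) →ₗ[ℂ] ℂ))
    (R : Fin N → ℝ) (hmono : Monotone R)
    (hgrow : ∀ (i : Fin N) (T : Finset (Fin N)) (c : Fin N → ℂ) (hT : T.Nonempty),
      (∀ j ∈ T, j < i) → (∀ j ∈ T, c j ≠ 0) → h i = ∑ j ∈ T, c j • h j →
        (∑ j ∈ T, ‖c j‖) * R (T.max' hT) < R i)
    (S : Finset (Fin N)) (hbase : LinBase h S) (hnbc : LinNoBrokenCircuit h S)
    (x : Fin r → ℂ) (hx : ∀ j ∈ S, ‖h j x‖ = R j) :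
    ∀ i ∉ S, R i < ‖h i x‖ := by
  intro i hiS
  obtain ⟨C, hCS, hiC, hC⟩ := hbase.exists_linCircuit_subset_insert hiS
  have hne : C.Nonempty := ⟨i, hiC⟩
  set m := C.max' hne
  have hmS : m ∈ S := hnbc.max'_mem hC hCS hne
  obtain ⟨d, hd, hrel⟩ := hC.exists_eq_sum_erase (C.max'_mem hne)
  have hiT : i ∈ C.erase m := mem_erase.mpr ⟨(ne_of_mem_of_not_mem hmS hiS).symm, hiC⟩
  have hTm : ∀ j ∈ C.erase m, j < m := fun j hj =>
    (C.le_max' j (mem_of_mem_erase hj)).lt_of_ne (ne_of_mem_erase hj)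
  refine lt_of_sum_mul_lt_sum_mul_of_eqOn_erase hiT (a := fun j => ‖d j‖)
    (norm_pos_iff.mpr (hd i hiT)) (fun j hj => hx j ?_) ?_
  · exact mem_of_mem_insert_of_ne (hCS (mem_of_mem_erase (mem_of_mem_erase hj)))
      (ne_of_mem_erase hj)
  calc ∑ j ∈ C.erase m, ‖d j‖ * R j
      ≤ ∑ j ∈ C.erase m, ‖d j‖ * R ((C.erase m).max' ⟨i, hiT⟩) :=
        sum_le_sum fun j hj => mul_le_mul_of_nonneg_left (hmono (le_max' _ j hj)) (norm_nonneg _)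
    _ < R m := by rw [← sum_mul]; exact hgrow m _ d _ hTm hd hrel
    _ = ‖h m x‖ := (hx m hmS).symm
    _ ≤ ∑ j ∈ C.erase m, ‖d j‖ * ‖h j x‖ := norm_apply_le_sum_of_eq_sum hrel x

/-- If `S` is a basis of the arrangement of the forms `h₁,…,h_N` containing no broken
circuit (with respect to `H₁ < ⋯ < H_N`), the radii `R₁ ≪ ⋯ ≪ R_N` grow fast enough
with respect to the circuit relations, and `x` satisfies `|h_j(x)| = R_j` for all
`j ∈ S`, then `|h_i(x)| > R_i` for every hyperplane `H_i ∉ S`. -/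
theorem nbc_base_stratum_strict (N r : ℕ)
    (h : Fin N → ((Fin r → ℂ) →ₗ[ℂ] ℂ))
    (hspan : Submodule.span ℂ (Set.range h) = ⊤)
    (R : Fin N → ℝ) (hpos : ∀ i, 0 < R i) (hmono : Monotone R)
    (hgrow : ∀ (i : Fin N) (T : Finset (Fin N)) (c : Fin N → ℂ) (hT : T.Nonempty),
      (∀ j ∈ T, j < i) → (∀ j ∈ T, c j ≠ 0) → h i = ∑ j ∈ T, c j • h j →
        (∑ j ∈ T, ‖c j‖) * R (T.max' hT) < R i)
    (S : Finset (Fin N)) (hbase : LinBase h S) (hnbc : LinNoBrokenCircuit h S)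
    (x : Fin r → ℂ) (hx : ∀ j ∈ S, ‖h j x‖ = R j) :
    ∀ i ∉ S, R i < ‖h i x‖ :=
  nbc_base_stratum_strict_general N r h R hmono hgrow S hbase hnbc x hx
end
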